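/- For 0 < r < 1 and π < φ < 2π, the function h(r, φ, θ1, θ2) satisfies 0 ≤ h(r, φ, θ1, θ2) ≤ −(2/π)·arctan(2r sinφ/(1−r²)) for all θ1, θ2 ∈ [−π, 0], with the upper bound attained at θ1 = θ2 = −π/2 and the lower bound attained exactly when θ1 ∈ {−π, 0} or θ2 ∈ {−π, 0}. -/

import Mathlib

noncomputable def hfun (r φ θ1 θ2 : ℝ) : ℝ :=
  (1 / Real.pi) *
    (Real.arctan (r * Real.sin (φ - (θ1 + θ2)) / (1 - r * Real.cos (φ - (θ1 + θ2))))
      + Real.arctan (r * Real.sin (φ + (θ1 + θ2)) / (1 - r * Real.cos (φ + (θ1 + θ2))))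
      - Real.arctan (r * Real.sin (φ - (θ1 - θ2)) / (1 - r * Real.cos (φ - (θ1 - θ2))))
      - Real.arctan (r * Real.sin (φ + (θ1 - θ2)) / (1 - r * Real.cos (φ + (θ1 - θ2)))))

open Real Set

noncomputable def gg (r x : ℝ) : ℝ := arctan (r * sin x / (1 - r * cos x))

noncomputable def GG (r φ t : ℝ) : ℝ := gg r (φ - t) + gg r (φ + t)

lemma hfun_eq (r φ θ1 θ2 : ℝ) :
    hfun r φ θ1 θ2 = (1 / π) * (GG r φ (θ1 + θ2) - GG r φ (θ1 - θ2)) := by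
  unfold hfun GG gg; ring

lemma GG_even (r φ t : ℝ) : GG r φ (-t) = GG r φ t := by
  unfold GG
  rw [sub_neg_eq_add, ← sub_eq_add_neg, add_comm]

lemma GG_period (r φ t : ℝ) : GG r φ (t + 2 * π) = GG r φ t := by
  unfold GG gg
  have h1 : φ - (t + 2 * π) = (φ - t) - 2 * π := by ring
  have h2 : φ + (t + 2 * π) = (φ + t) + 2 * π := by ring
  rw [h1, h2, Real.sin_sub_two_pi, Real.cos_sub_two_pi, Real.sin_add_two_pi,
    Real.cos_add_two_pi]

lemma gg_hasDeriv (r : ℝ) (hr0 : 0 < r) (hr1 : r < 1) (x : ℝ) :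
    HasDerivAt (gg r) ((r * cos x - r ^ 2) / (1 - 2 * r * cos x + r ^ 2)) x := by
  have hq : (0:ℝ) < 1 - r * cos x := by nlinarith [Real.cos_le_one x, Real.neg_one_le_cos x]
  have hD : (0:ℝ) < 1 - 2 * r * cos x + r ^ 2 := by
    nlinarith [Real.cos_le_one x, Real.neg_one_le_cos x]
  have hp : HasDerivAt (fun y => r * sin y) (r * cos x) x :=
    (Real.hasDerivAt_sin x).const_mul r
  have hqd : HasDerivAt (fun y => 1 - r * cos y) (r * sin x) x := by
    have := ((Real.hasDerivAt_cos x).const_mul r).const_sub 1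
    exact this.congr_deriv (by ring)
  have hdiv := hp.div hqd hq.ne'
  have harc := (Real.hasDerivAt_arctan (r * sin x / (1 - r * cos x))).comp x hdiv
  refine harc.congr_deriv ?_
  have hs := Real.sin_sq_add_cos_sq x
  have e1 : r * cos x * (1 - r * cos x) - r * sin x * (r * sin x) = r * cos x - r ^ 2 := by
    linear_combination (-(r ^ 2)) * hs
  have e2 : 1 + (r * sin x / (1 - r * cos x)) ^ 2
      = (1 - 2 * r * cos x + r ^ 2) / (1 - r * cos x) ^ 2 := by
    field_simp
    linear_combination r ^ 2 * hs
  rw [e1, e2, one_div_div]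
  field_simp

lemma GG_hasDeriv (r φ : ℝ) (hr0 : 0 < r) (hr1 : r < 1) (t : ℝ) :
    HasDerivAt (GG r φ)
      ((r * cos (φ + t) - r ^ 2) / (1 - 2 * r * cos (φ + t) + r ^ 2)
        - (r * cos (φ - t) - r ^ 2) / (1 - 2 * r * cos (φ - t) + r ^ 2)) t := by
  have h1 : HasDerivAt (fun t => gg r (φ - t))
      (-((r * cos (φ - t) - r ^ 2) / (1 - 2 * r * cos (φ - t) + r ^ 2))) t := by
    have hin : HasDerivAt (fun t : ℝ => φ - t) (-1) t := by
      simpa using (hasDerivAt_id t).const_sub φ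
    have := (gg_hasDeriv r hr0 hr1 (φ - t)).comp t hin
    exact this.congr_deriv (by ring)
  have h2 : HasDerivAt (fun t => gg r (φ + t))
      ((r * cos (φ + t) - r ^ 2) / (1 - 2 * r * cos (φ + t) + r ^ 2)) t := by
    have hin : HasDerivAt (fun t : ℝ => φ + t) 1 t := by
      simpa using (hasDerivAt_id t).const_add φ
    have := (gg_hasDeriv r hr0 hr1 (φ + t)).comp t hin
    exact this.congr_deriv (mul_one _)
  have := h1.add h2
  unfold GG
  exact this.congr_deriv (by ring)

lemma GG_mono (r φ : ℝ) (hr0 : 0 < r) (hr1 : r < 1) (hφ : sin φ < 0) :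
    StrictMonoOn (GG r φ) (Icc 0 π) := by
  apply strictMonoOn_of_deriv_pos (convex_Icc 0 π)
  · exact fun t _ => (GG_hasDeriv r φ hr0 hr1 t).continuousAt.continuousWithinAt
  · intro t ht
    rw [interior_Icc] at ht
    rw [(GG_hasDeriv r φ hr0 hr1 t).deriv]
    have hst : 0 < sin t := Real.sin_pos_of_pos_of_lt_pi ht.1 ht.2
    have hDu : (0:ℝ) < 1 - 2 * r * cos (φ + t) + r ^ 2 := by
      nlinarith [Real.cos_le_one (φ + t), Real.neg_one_le_cos (φ + t)]
    have hDv : (0:ℝ) < 1 - 2 * r * cos (φ - t) + r ^ 2 := by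
      nlinarith [Real.cos_le_one (φ - t), Real.neg_one_le_cos (φ - t)]
    rw [sub_pos, div_lt_div_iff₀ hDv hDu]
    have hexp : (r * cos (φ + t) - r ^ 2) * (1 - 2 * r * cos (φ - t) + r ^ 2)
        - (r * cos (φ - t) - r ^ 2) * (1 - 2 * r * cos (φ + t) + r ^ 2)
        = r * (1 - r ^ 2) * (2 * (-sin φ) * sin t) := by
      rw [Real.cos_add, Real.cos_sub]; ring
    nlinarith [mul_pos (mul_pos hr0 (by nlinarith : (0:ℝ) < 1 - r ^ 2))
      (by nlinarith : (0:ℝ) < 2 * (-sin φ) * sin t)]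

lemma GG_arccos (r φ t : ℝ) (h1 : -(2 * π) ≤ t) (h2 : t ≤ π) :
    GG r φ t = GG r φ (arccos (cos t)) := by
  rcases le_or_gt 0 t with h | h
  · rw [Real.arccos_cos h h2]
  rcases le_or_gt (-π) t with h3 | h3
  · have ha : arccos (cos t) = -t := by
      rw [← Real.cos_neg, Real.arccos_cos (by linarith) (by linarith)]
    rw [ha, GG_even]
  · have hc : cos t = cos (t + 2 * π) := (Real.cos_add_two_pi t).symm
    have ha : arccos (cos t) = t + 2 * π := by
      rw [hc, Real.arccos_cos (by linarith) (by linarith)]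
    rw [ha, GG_period]

lemma GG_gap (r φ : ℝ) (hr0 : 0 < r) (hr1 : r < 1) :
    GG r φ π - GG r φ 0 = -(2 * arctan (2 * r * sin φ / (1 - r ^ 2))) := by
  have hc1 : (0:ℝ) < 1 + r * cos φ := by nlinarith [Real.neg_one_le_cos φ]
  have hc2 : (0:ℝ) < 1 - r * cos φ := by nlinarith [Real.cos_le_one φ]
  have h1r : (0:ℝ) < 1 - r ^ 2 := by nlinarith
  have hs := Real.sin_sq_add_cos_sq φ
  have hprod : (r * sin φ / (1 + r * cos φ)) * (r * sin φ / (1 - r * cos φ)) < 1 := by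
    rw [div_mul_div_comm, div_lt_one (by positivity)]
    nlinarith [sq_nonneg (r * sin φ)]
  have hApB : r * sin φ / (1 + r * cos φ) + r * sin φ / (1 - r * cos φ)
      = 2 * r * sin φ / ((1 + r * cos φ) * (1 - r * cos φ)) := by
    field_simp; ring
  have hAB : 1 - (r * sin φ / (1 + r * cos φ)) * (r * sin φ / (1 - r * cos φ))
      = (1 - r ^ 2) / ((1 + r * cos φ) * (1 - r * cos φ)) := by
    field_simp
    linear_combination (-(r ^ 2)) * hs
  have hDne : ((1 + r * cos φ) * (1 - r * cos φ)) ≠ 0 := (mul_pos hc1 hc2).ne'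
  have h1rne : (1 - r ^ 2) ≠ 0 := h1r.ne'
  have key : arctan (r * sin φ / (1 + r * cos φ)) + arctan (r * sin φ / (1 - r * cos φ))
      = arctan (2 * r * sin φ / (1 - r ^ 2)) := by
    rw [Real.arctan_add hprod]
    congr 1
    rw [hApB, hAB]
    field_simp
  unfold GG gg
  rw [Real.sin_sub_pi, Real.cos_sub_pi, Real.sin_add_pi, Real.cos_add_pi, sub_zero, add_zero]
  have e1 : r * -sin φ / (1 - r * -cos φ) = -(r * sin φ / (1 + r * cos φ)) := by
    rw [mul_neg, mul_neg, sub_neg_eq_add, neg_div]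
  rw [e1, Real.arctan_neg]
  linarith [key]

lemma sin_zero_char (θ : ℝ) (h1 : -π ≤ θ) (h2 : θ ≤ 0) :
    sin θ = 0 ↔ θ = -π ∨ θ = 0 := by
  have hπ : (0:ℝ) < π := Real.pi_pos
  constructor
  · intro h
    rcases Real.sin_eq_zero_iff.mp h with ⟨n, hn⟩
    have hn1 : (-1:ℝ) ≤ (n:ℤ) := by nlinarith
    have hn2 : ((n:ℤ):ℝ) ≤ 0 := by nlinarith
    have hn1' : (-1:ℤ) ≤ n := by exact_mod_cast hn1
    have hn2' : n ≤ 0 := by exact_mod_cast hn2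
    interval_cases n
    · left; push_cast at hn; linarith
    · right; push_cast at hn; linarith
  · rintro (rfl | rfl) <;> simp

/-- For `0 < r < 1` and `π < φ < 2π`: `0 ≤ h ≤ −(2/π) arctan (2 r sin φ/(1−r²))` on
`[−π,0]²`, with the upper bound attained at `θ1 = θ2 = −π/2` and the lower bound attained
exactly when `θ1 ∈ {−π, 0}` or `θ2 ∈ {−π, 0}`. -/
theorem hfun_bounds_of_phi_neg (r φ : ℝ) (h0 : 0 < r) (h1 : r < 1)
    (hφ1 : Real.pi < φ) (hφ2 : φ < 2 * Real.pi) :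
    (∀ θ1 ∈ Set.Icc (-Real.pi) 0, ∀ θ2 ∈ Set.Icc (-Real.pi) 0,
      0 ≤ hfun r φ θ1 θ2 ∧
        hfun r φ θ1 θ2 ≤ -(2 / Real.pi) * Real.arctan (2 * r * Real.sin φ / (1 - r ^ 2))) ∧
    hfun r φ (-(Real.pi / 2)) (-(Real.pi / 2))
      = -(2 / Real.pi) * Real.arctan (2 * r * Real.sin φ / (1 - r ^ 2)) ∧
    (∀ θ1 ∈ Set.Icc (-Real.pi) 0, ∀ θ2 ∈ Set.Icc (-Real.pi) 0,
      (hfun r φ θ1 θ2 = 0 ↔ (θ1 = -Real.pi ∨ θ1 = 0) ∨ (θ2 = -Real.pi ∨ θ2 = 0))) := by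
  have hπ : (0:ℝ) < π := Real.pi_pos
  have hsφ : sin φ < 0 := by
    have h := Real.sin_neg_of_neg_of_neg_pi_lt (x := φ - 2 * π) (by linarith) (by linarith)
    rwa [Real.sin_sub_two_pi] at h
  have hmono := GG_mono r φ h0 h1 hsφ
  have hmem0 : (0:ℝ) ∈ Icc (0:ℝ) π := ⟨le_refl _, hπ.le⟩
  have hmemπ : π ∈ Icc (0:ℝ) π := ⟨hπ.le, le_refl _⟩
  have B_eq : (1 / π) * (GG r φ π - GG r φ 0)
      = -(2 / π) * arctan (2 * r * sin φ / (1 - r ^ 2)) := by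
    rw [GG_gap r φ h0 h1]
    field_simp
    try ring
  -- general analysis for θ1 θ2 in the square
  have main : ∀ θ1 ∈ Icc (-π) 0, ∀ θ2 ∈ Icc (-π) 0,
      (0 ≤ hfun r φ θ1 θ2 ∧
        hfun r φ θ1 θ2 ≤ -(2 / π) * arctan (2 * r * sin φ / (1 - r ^ 2))) ∧
      (hfun r φ θ1 θ2 = 0 ↔ (θ1 = -π ∨ θ1 = 0) ∨ (θ2 = -π ∨ θ2 = 0)) := by
    intro θ1 hθ1 θ2 hθ2
    obtain ⟨h1a, h1b⟩ := hθ1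
    obtain ⟨h2a, h2b⟩ := hθ2
    set a := arccos (cos (θ1 + θ2)) with ha_def
    set b := arccos (cos (θ1 - θ2)) with hb_def
    have ha : a ∈ Icc (0:ℝ) π := ⟨Real.arccos_nonneg _, Real.arccos_le_pi _⟩
    have hb : b ∈ Icc (0:ℝ) π := ⟨Real.arccos_nonneg _, Real.arccos_le_pi _⟩
    have hEq : hfun r φ θ1 θ2 = (1 / π) * (GG r φ a - GG r φ b) := by
      rw [hfun_eq, GG_arccos r φ (θ1 + θ2) (by linarith) (by linarith),
        GG_arccos r φ (θ1 - θ2) (by linarith) (by linarith)]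
    have hs1 : sin θ1 ≤ 0 := by
      have := Real.sin_nonneg_of_nonneg_of_le_pi (x := -θ1) (by linarith) (by linarith)
      rw [Real.sin_neg] at this; linarith
    have hs2 : sin θ2 ≤ 0 := by
      have := Real.sin_nonneg_of_nonneg_of_le_pi (x := -θ2) (by linarith) (by linarith)
      rw [Real.sin_neg] at this; linarith
    have hcos : cos (θ1 + θ2) ≤ cos (θ1 - θ2) := by
      rw [Real.cos_add, Real.cos_sub]
      nlinarith [mul_nonneg (neg_nonneg.mpr hs1) (neg_nonneg.mpr hs2)]
    have hab : b ≤ a :=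
      Real.strictAntiOn_arccos.antitoneOn ⟨Real.neg_one_le_cos _, Real.cos_le_one _⟩
        ⟨Real.neg_one_le_cos _, Real.cos_le_one _⟩ hcos
    have hGba : GG r φ b ≤ GG r φ a := hmono.monotoneOn hb ha hab
    have hGaπ : GG r φ a ≤ GG r φ π := hmono.monotoneOn ha hmemπ ha.2
    have hG0b : GG r φ 0 ≤ GG r φ b := hmono.monotoneOn hmem0 hb hb.1
    refine ⟨⟨?_, ?_⟩, ?_⟩
    · rw [hEq]
      apply mul_nonneg (by positivity) (by linarith)
    · rw [hEq, ← B_eq]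
      apply mul_le_mul_of_nonneg_left (by linarith) (by positivity)
    · rw [hEq]
      have hiff1 : (1 / π) * (GG r φ a - GG r φ b) = 0 ↔ GG r φ a = GG r φ b := by
        constructor
        · intro h
          have : GG r φ a - GG r φ b = 0 := by
            rcases mul_eq_zero.mp h with h' | h'
            · exact absurd h' (by positivity)
            · exact h'
          linarith
        · intro h; rw [h]; ring
      have hiff2 : GG r φ a = GG r φ b ↔ a = b :=
        ⟨fun h => hmono.injOn ha hb h, fun h => by rw [h]⟩
      have hiff3 : a = b ↔ cos (θ1 + θ2) = cos (θ1 - θ2) := by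
        constructor
        · intro h
          have := congrArg cos h
          rwa [Real.cos_arccos (Real.neg_one_le_cos _) (Real.cos_le_one _),
            Real.cos_arccos (Real.neg_one_le_cos _) (Real.cos_le_one _)] at this
        · intro h; rw [ha_def, hb_def, h]
      have hiff4 : cos (θ1 + θ2) = cos (θ1 - θ2) ↔ sin θ1 * sin θ2 = 0 := by
        rw [Real.cos_add, Real.cos_sub]
        constructor <;> intro h <;> linarith
      rw [hiff1, hiff2, hiff3, hiff4, mul_eq_zero, sin_zero_char θ1 h1a h1b,
        sin_zero_char θ2 h2a h2b]
  refine ⟨fun θ1 h1' θ2 h2' => (main θ1 h1' θ2 h2').1, ?_, fun θ1 h1' θ2 h2' => (main θ1 h1' θ2 h2').2⟩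
  have e1 : -(π / 2) + -(π / 2) = -π := by ring
  have e2 : -(π / 2) - -(π / 2) = (0:ℝ) := by ring
  rw [hfun_eq, e1, e2, show -π = -(π) from rfl, GG_even, B_eq]
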